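/- arXiv:2410.04127 — 5 statements merged into one kernel-verified Lean document; each statement's English description precedes it below -/
import Mathlib

section
/- Let X be a finite rack whose proper subrack poset is nonempty, and suppose every maximal proper subrack M of X is stabilized (setwise) by all of Inn(X), i.e., φ_a(M) = M for all a ∈ X. Then every maximal proper subrack of X is the union of all but one of the Inn(X)-orbits of X, and consequently the number of maximal proper subracks equals the number m of Inn(X)-orbits in X. -/
open MulAction Pointwise

/-- `S` is a subrack: every left multiplication by an element of `S` restricts to a
bijection of `S`. -/
def IsSubrack9 {X : Type*} (op : X → X → X) (S : Set X) : Prop :=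
  ∀ a ∈ S, Set.BijOn (op a) S S

/-- `M` is a maximal proper subrack of `X`. -/
def IsMaxProperSubrack9 {X : Type*} (op : X → X → X) (M : Set X) : Prop :=
  IsSubrack9 op M ∧ M ≠ Set.univ ∧
    ∀ S : Set X, IsSubrack9 op S → M ⊂ S → S = Set.univ

/-- The inner automorphism group of the rack `(X, op)`: the subgroup of `Equiv.Perm X`
generated by the left multiplications `φ_a`. -/
def InnRack9 {X : Type*} (op : X → X → X) (hbij : ∀ a : X, Function.Bijective (op a)) :
    Subgroup (Equiv.Perm X) :=
  Subgroup.closure (Set.range fun a => Equiv.ofBijective (op a) (hbij a))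

/-!
If every maximal proper subrack `M` is invariant under all left multiplications, then so is
`M ∪ O` for any `Inn(X)`-orbit `O`; taking `O` outside `M`, maximality forces `M ∪ O = X`,
and invariance makes `O` disjoint from `M`, so `M = Oᶜ`. Conversely a proper subrack
strictly containing `Oᶜ` would lie in some maximal `O'ᶜ` with `O' ⊊ O`, which is impossible
for orbits. Hence `O ↦ Oᶜ` is a bijection from orbits to maximal proper subracks.
-/

section

variable {X : Type*} {op : X → X → X}

theorem isSubrack9_of_forall_image_eq (hinj : ∀ a : X, Function.Injective (op a))
    {S : Set X} (h : ∀ a : X, op a '' S = S) : IsSubrack9 op S :=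
  fun a _ => ⟨fun _ hx => h a ▸ Set.mem_image_of_mem _ hx, (hinj a).injOn,
    fun _ hx => (h a).symm ▸ hx⟩

theorem ofBijective_mem_innRack9 (hbij : ∀ a : X, Function.Bijective (op a)) (a : X) :
    Equiv.ofBijective (op a) (hbij a) ∈ InnRack9 op hbij :=
  Subgroup.subset_closure ⟨a, rfl⟩

theorem image_orbit_innRack9 (hbij : ∀ a : X, Function.Bijective (op a)) (a x : X) :
    op a '' orbit (InnRack9 op hbij) x = orbit (InnRack9 op hbij) x :=
  smul_orbit (⟨_, ofBijective_mem_innRack9 hbij a⟩ : InnRack9 op hbij) x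

theorem innRack9_le_stabilizer (hbij : ∀ a : X, Function.Bijective (op a)) {M : Set X}
    (h : ∀ a : X, op a '' M = M) : InnRack9 op hbij ≤ stabilizer (Equiv.Perm X) M := by
  rw [InnRack9, Subgroup.closure_le]
  rintro _ ⟨a, rfl⟩
  exact h a

theorem mem_iff_of_mem_orbit_innRack9 (hbij : ∀ a : X, Function.Bijective (op a))
    {M : Set X} (h : ∀ a : X, op a '' M = M) {x y : X}
    (hy : y ∈ orbit (InnRack9 op hbij) x) : y ∈ M ↔ x ∈ M := by
  obtain ⟨g, rfl⟩ := hy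
  exact mem_stabilizer_set.mp (innRack9_le_stabilizer hbij h g.2) x

theorem IsMaxProperSubrack9.eq_compl_orbit (hbij : ∀ a : X, Function.Bijective (op a))
    {M : Set X} (hM : IsMaxProperSubrack9 op M) (hMinv : ∀ a : X, op a '' M = M) :
    ∃ x : X, M = (orbit (InnRack9 op hbij) x)ᶜ := by
  obtain ⟨x, hx⟩ := (Set.ne_univ_iff_exists_notMem M).mp hM.2.1
  set O := orbit (InnRack9 op hbij) x
  have hunion : M ∪ O = Set.univ := by
    refine hM.2.2 _ (isSubrack9_of_forall_image_eq (fun a => (hbij a).1) fun a => ?_) ?_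
    · rw [Set.image_union, hMinv, image_orbit_innRack9]
    · exact Set.ssubset_iff_of_subset Set.subset_union_left |>.mpr
        ⟨x, Or.inr (mem_orbit_self x), hx⟩
  refine ⟨x, Set.ext fun y => ⟨fun hyM hyO => ?_, fun hyO => ?_⟩⟩
  · exact hx ((mem_iff_of_mem_orbit_innRack9 hbij hMinv hyO).mp hyM)
  · exact ((Set.eq_univ_iff_forall.mp hunion) y).resolve_right hyO

theorem exists_isMaxProperSubrack9_superset [Finite X] {S : Set X} (hS : IsSubrack9 op S)
    (hSne : S ≠ Set.univ) : ∃ M : Set X, IsMaxProperSubrack9 op M ∧ S ⊆ M := by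
  obtain ⟨M, ⟨hMsub, hMne, hSM⟩, hMmax⟩ :=
    (Set.toFinite {T : Set X | IsSubrack9 op T ∧ T ≠ Set.univ ∧ S ⊆ T}).exists_maximalFor id _
      ⟨S, hS, hSne, subset_rfl⟩
  refine ⟨M, ⟨hMsub, hMne, fun T hT hMT => ?_⟩, hSM⟩
  by_contra hTne
  exact hMT.2 (hMmax ⟨hT, hTne, hSM.trans hMT.1⟩ hMT.1)

theorem isMaxProperSubrack9_compl_orbit [Finite X]
    (hbij : ∀ a : X, Function.Bijective (op a))
    (hstab : ∀ M : Set X, IsMaxProperSubrack9 op M → ∀ a : X, op a '' M = M) (x : X) :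
    IsMaxProperSubrack9 op (orbit (InnRack9 op hbij) x)ᶜ := by
  set O := orbit (InnRack9 op hbij) x
  refine ⟨isSubrack9_of_forall_image_eq (fun a => (hbij a).1) fun a => ?_,
    fun h => (h ▸ Set.mem_univ x : x ∈ Oᶜ) (mem_orbit_self x), fun S hS hOS => ?_⟩
  · rw [Set.image_compl_eq (hbij a), image_orbit_innRack9]
  by_contra hSne
  obtain ⟨M, hM, hSM⟩ := exists_isMaxProperSubrack9_superset hS hSne
  obtain ⟨y, rfl⟩ := hM.eq_compl_orbit hbij (hstab M hM)
  have hyO : y ∈ O := Set.compl_subset_compl.mp (hOS.1.trans hSM) (mem_orbit_self y)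
  rw [orbit_eq_iff.mpr hyO] at hSM
  exact hOS.2 hSM

end

theorem stmt_9_general {X : Type*} [Fintype X] (op : X → X → X)
    (hbij : ∀ a : X, Function.Bijective (op a))
    (hstab : ∀ M : Set X, IsMaxProperSubrack9 op M → ∀ a : X, op a '' M = M) :
    (∀ M : Set X, IsMaxProperSubrack9 op M →
      ∃ x : X, M = (MulAction.orbit (InnRack9 op hbij) x : Set X)ᶜ) ∧
    Nat.card {M : Set X // IsMaxProperSubrack9 op M} =
      Nat.card (MulAction.orbitRel.Quotient (InnRack9 op hbij) X) := by
  refine ⟨fun M hM => hM.eq_compl_orbit hbij (hstab M hM), Eq.symm ?_⟩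
  refine Nat.card_eq_of_bijective (fun q => ⟨q.orbitᶜ, ?_⟩) ⟨fun p q h => ?_, ?_⟩
  · induction q using Quotient.inductionOn' with
    | h x => exact isMaxProperSubrack9_compl_orbit hbij hstab x
  · exact orbitRel.Quotient.orbit_injective (compl_injective (congrArg Subtype.val h))
  · rintro ⟨M, hM⟩
    obtain ⟨x, rfl⟩ := hM.eq_compl_orbit hbij (hstab M hM)
    exact ⟨Quotient.mk'' x, rfl⟩

/-- Let `X` be a finite rack with a nonempty proper subrack poset such
that every maximal proper subrack is setwise stabilized by all of `Inn(X)`.  Then every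
maximal proper subrack is the union of all but one `Inn(X)`-orbit (i.e. the complement
of a single orbit), and the number of maximal proper subracks equals the number `m` of
`Inn(X)`-orbits in `X`. -/
theorem stmt_9 {X : Type*} [Fintype X] (op : X → X → X)
    (hbij : ∀ a : X, Function.Bijective (op a))
    (hA1 : ∀ a b c : X, op a (op b c) = op (op a b) (op a c))
    (hne : ∃ S : Set X, IsSubrack9 op S ∧ S ≠ ∅ ∧ S ≠ Set.univ)
    (hstab : ∀ M : Set X, IsMaxProperSubrack9 op M → ∀ a : X, op a '' M = M) :
    (∀ M : Set X, IsMaxProperSubrack9 op M →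
      ∃ x : X, M = (MulAction.orbit (InnRack9 op hbij) x : Set X)ᶜ) ∧
    Nat.card {M : Set X // IsMaxProperSubrack9 op M} =
      Nat.card (MulAction.orbitRel.Quotient (InnRack9 op hbij) X) :=
  stmt_9_general op hbij hstab
end

section
/- Let G be a finite group and X ⊆ G a conjugation rack (a subset closed under conjugation, with operation a ▷ b = a*b*a⁻¹). Let Z = X ∩ Z(G). Suppose Z and Y := X \ Z are both nonempty. Then the map S ↦ (S ∩ Y, S ∩ Z) is a lattice isomorphism from the subrack lattice R(X) to the product R(Y) × R(Z). -/
/-!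
Conjugation never moves a non-central element into the centre and fixes every central one, so
both `Y` and `Z` are closed under conjugation by all of `G`, and `S ↦ (S ∩ Y, S ∩ Z)` lands in
`R(Y) × R(Z)`. Conversely a union of subracks of `Y` and of `Z` is a subrack of `X`, because a
mixed product `a ▷ b` with a central factor is just `b`.
-/

/-- `S` is a subrack of the conjugation rack `X ⊆ G`: `S ⊆ X` and `S` is closed under
conjugation by its own elements. -/
def IsSubrackOf11 {G : Type*} [Group G] (X S : Set G) : Prop :=
  S ⊆ X ∧ ∀ a ∈ S, ∀ b ∈ S, a * b * a⁻¹ ∈ S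

namespace Subgroup

variable {G : Type*} [Group G] {a b : G}

theorem conj_eq_self_of_right_mem_center (hb : b ∈ center G) : a * b * a⁻¹ = b := by
  rw [mem_center_iff.mp hb a, mul_inv_cancel_right]

theorem conj_eq_self_of_left_mem_center (ha : a ∈ center G) : a * b * a⁻¹ = b := by
  rw [← mem_center_iff.mp ha b, mul_inv_cancel_right]

theorem conj_mem_center_iff : a * b * a⁻¹ ∈ center G ↔ b ∈ center G := by
  refine ⟨fun h => ?_, fun h => (conj_eq_self_of_right_mem_center h).symm ▸ h⟩
  simpa [mul_assoc] using (inferInstance : (center G).Normal).conj_mem _ h a⁻¹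

end Subgroup

open Subgroup

namespace IsSubrackOf11

variable {G : Type*} [Group G] {X Y Z S A B : Set G}

theorem inter_of_conj_mem (hS : IsSubrackOf11 X S) (hY : ∀ a : G, ∀ b ∈ Y, a * b * a⁻¹ ∈ Y) :
    IsSubrackOf11 Y (S ∩ Y) :=
  ⟨Set.inter_subset_right, fun a ha b hb => ⟨hS.2 a ha.1 b hb.1, hY a b hb.2⟩⟩

theorem union_of_subset_center (hA : IsSubrackOf11 Y A) (hB : IsSubrackOf11 Z B)
    (hZ : Z ⊆ center G) : IsSubrackOf11 (Y ∪ Z) (A ∪ B) := by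
  have hBc : B ⊆ center G := hB.1.trans hZ
  refine ⟨Set.union_subset_union hA.1 hB.1, ?_⟩
  rintro a (haA | haB) b (hbA | hbB)
  · exact Or.inl (hA.2 a haA b hbA)
  · rw [conj_eq_self_of_right_mem_center (hBc hbB)]; exact Or.inr hbB
  · rw [conj_eq_self_of_left_mem_center (hBc haB)]; exact Or.inl hbA
  · rw [conj_eq_self_of_left_mem_center (hBc haB)]; exact Or.inr hbB

end IsSubrackOf11

section Decomposition

variable {G : Type*} [Group G] {X Y Z : Set G}

theorem conj_mem_of_subset_center (hZ : Z ⊆ center G) (a : G) : ∀ b ∈ Z, a * b * a⁻¹ ∈ Z :=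
  fun _ hb => (conj_eq_self_of_right_mem_center (hZ hb)).symm ▸ hb

theorem conj_mem_sdiff_center (hX : ∀ a ∈ X, ∀ g : G, g * a * g⁻¹ ∈ X) (a : G) :
    ∀ b ∈ X \ (X ∩ center G), a * b * a⁻¹ ∈ X \ (X ∩ center G) :=
  fun b hb => ⟨hX b hb.1 a, fun hc => hb.2 ⟨hb.1, conj_mem_center_iff.mp hc.2⟩⟩

def subrackOrderIsoProd (hXYZ : Y ∪ Z = X) (hYZ : Disjoint Y Z)
    (hY : ∀ a : G, ∀ b ∈ Y, a * b * a⁻¹ ∈ Y) (hZ : Z ⊆ center G) :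
    {S : Set G // IsSubrackOf11 X S} ≃o
      {S : Set G // IsSubrackOf11 Y S} × {S : Set G // IsSubrackOf11 Z S} :=
  Equiv.toOrderIso
    { toFun := fun S => (⟨S.1 ∩ Y, S.2.inter_of_conj_mem hY⟩,
        ⟨S.1 ∩ Z, S.2.inter_of_conj_mem (conj_mem_of_subset_center hZ)⟩)
      invFun := fun p => ⟨p.1.1 ∪ p.2.1, hXYZ ▸ p.1.2.union_of_subset_center p.2.2 hZ⟩
      left_inv := fun S => Subtype.ext <| show S.1 ∩ Y ∪ S.1 ∩ Z = S.1 by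
        rw [← Set.inter_union_distrib_left, hXYZ, Set.inter_eq_left.mpr S.2.1]
      right_inv := fun ⟨A, B⟩ => Prod.ext
        (Subtype.ext <| show (A.1 ∪ B.1) ∩ Y = A.1 by
          rw [Set.union_inter_distrib_right, Set.inter_eq_left.mpr A.2.1,
            (hYZ.symm.mono_left B.2.1).inter_eq, Set.union_empty])
        (Subtype.ext <| show (A.1 ∪ B.1) ∩ Z = B.1 by
          rw [Set.union_inter_distrib_right, Set.inter_eq_left.mpr B.2.1,
            (hYZ.mono_left A.2.1).inter_eq, Set.empty_union]) }
    (fun _ _ h => ⟨Set.inter_subset_inter_left _ h, Set.inter_subset_inter_left _ h⟩)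
    (fun _ _ h => Set.union_subset_union h.1 h.2)

end Decomposition

theorem stmt_11_general {G : Type*} [Group G] (X : Set G)
    (hX : ∀ a ∈ X, ∀ g : G, g * a * g⁻¹ ∈ X) :
    ∃ e : {S : Set G // IsSubrackOf11 X S} ≃o
        ({S : Set G // IsSubrackOf11 (X \ (X ∩ (Subgroup.center G : Set G))) S} ×
         {S : Set G // IsSubrackOf11 (X ∩ (Subgroup.center G : Set G)) S}),
      ∀ S : {S : Set G // IsSubrackOf11 X S},
        ((e S).1 : Set G) = ↑S ∩ (X \ (X ∩ (Subgroup.center G : Set G))) ∧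
        ((e S).2 : Set G) = ↑S ∩ (X ∩ (Subgroup.center G : Set G)) :=
  ⟨subrackOrderIsoProd (Set.sdiff_union_of_subset Set.inter_subset_left) Set.disjoint_sdiff_left
      (conj_mem_sdiff_center hX) Set.inter_subset_right,
    fun _ => ⟨rfl, rfl⟩⟩

/-- Let `G` be a finite group, `X ⊆ G` a conjugation rack,
`Z = X ∩ Z(G)` and `Y = X \ Z`, both nonempty.  Then `S ↦ (S ∩ Y, S ∩ Z)` is a lattice
(order) isomorphism from the subrack lattice `R(X)` onto `R(Y) × R(Z)`. -/
theorem stmt_11 {G : Type*} [Group G] [Fintype G] (X : Set G)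
    (hX : ∀ a ∈ X, ∀ g : G, g * a * g⁻¹ ∈ X)
    (hZ : (X ∩ (Subgroup.center G : Set G)).Nonempty)
    (hY : (X \ (X ∩ (Subgroup.center G : Set G))).Nonempty) :
    ∃ e : {S : Set G // IsSubrackOf11 X S} ≃o
        ({S : Set G // IsSubrackOf11 (X \ (X ∩ (Subgroup.center G : Set G))) S} ×
         {S : Set G // IsSubrackOf11 (X ∩ (Subgroup.center G : Set G)) S}),
      ∀ S : {S : Set G // IsSubrackOf11 X S},
        ((e S).1 : Set G) = ↑S ∩ (X \ (X ∩ (Subgroup.center G : Set G))) ∧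
        ((e S).2 : Set G) = ↑S ∩ (X ∩ (Subgroup.center G : Set G)) :=
  stmt_11_general X hX
end

section
/- Let G be a finite group, X ⊆ G a conjugation rack, and Z = X ∩ Z(G) with both Z and X \ Z nonempty. Then the reduced Euler characteristic of the order complex of the poset of nonempty proper subracks of X equals (-1)^|Z| times the reduced Euler characteristic of the order complex of the poset of nonempty proper subracks of X \ Z. -/
/-- `S` is a subrack of the conjugation rack `X ⊆ G`. -/
def IsSubrackOf13 {G : Type*} [Group G] (X S : Set G) : Prop :=
  S ⊆ X ∧ ∀ a ∈ S, ∀ b ∈ S, a * b * a⁻¹ ∈ S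

/-- The reduced Euler characteristic of the order complex of a finite poset `α`:
the sum of `(-1)^(|C| - 1)` over all chains `C` of `α` (including the empty chain). -/
noncomputable def redEuler13 (α : Type*) [Finite α] [PartialOrder α] : ℤ :=
  letI := Fintype.ofFinite α
  letI := Classical.decPred fun C : Finset α => IsChain (· ≤ ·) (C : Set α)
  ∑ C ∈ Finset.univ.powerset.filter (fun C : Finset α => IsChain (· ≤ ·) (C : Set α)),
    (-1 : ℤ) ^ (C.card + 1)

/-! By P. Hall's theorem the reduced Euler characteristic of the order complex of an open
interval `(x, y)` of a finite poset is the Möbius number `μ(x, y)`, so both sides are Möbius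
numbers `μ(∅, X)` and `μ(∅, X \ Z)` of subrack lattices. Central elements are fixed by every
conjugation and conjugate every element to itself, while conjugates of non-central elements
are non-central; hence `S ⊆ X` is a subrack iff `S \ Z` is a subrack of `X \ Z`, and
`R(X) ≅ 2^Z × R(X \ Z)`. The Möbius function is multiplicative on products and
`μ(∅, Z) = (-1)^|Z|` in the Boolean lattice. -/

open Finset

namespace IncidenceAlgebra

section
variable {𝕜 α : Type*} [AddCommGroup 𝕜] [One 𝕜] [PartialOrder α] [LocallyFiniteOrder α]
  [DecidableEq α]

theorem eq_mu_of_eq_neg_sum_Ico {a : α} (f : α → 𝕜) (h_self : f a = 1)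
    (h_rec : ∀ b, a < b → f b = -∑ x ∈ Ico a b, f x) (b : α) (hab : a ≤ b) :
    f b = mu 𝕜 a b := by
  obtain rfl | hlt := hab.eq_or_lt
  · rw [h_self, mu_self]
  rw [h_rec b hlt, mu_eq_neg_sum_Ico_of_ne hlt.ne]
  congr 1
  refine sum_congr rfl fun x hx => ?_
  exact eq_mu_of_eq_neg_sum_Ico f h_self h_rec x (mem_Ico.1 hx).1
termination_by (Icc a b).card
decreasing_by
  exact card_lt_card (Icc_ssubset_Icc_right hab le_rfl (mem_Ico.1 hx).2)

theorem mu_orderIso {β : Type*} [PartialOrder β] [LocallyFiniteOrder β] [DecidableEq β]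
    (e : α ≃o β) (a b : α) : mu 𝕜 (e a) (e b) = mu 𝕜 a b := by
  by_cases hab : a ≤ b
  · refine eq_mu_of_eq_neg_sum_Ico (fun x => mu 𝕜 (e a) (e x)) (mu_self _) (fun c hac => ?_) b hab
    have h_Ico : Ico (e a) (e c) = (Ico a c).map e.toEquiv.toEmbedding := by
      ext y
      obtain ⟨x, rfl⟩ := e.surjective y
      simp
    rw [mu_eq_neg_sum_Ico_of_ne (e.lt_iff_lt.2 hac).ne, h_Ico, sum_map]
    rfl
  · rw [apply_eq_zero_of_not_le hab, apply_eq_zero_of_not_le (by simpa using hab)]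

end

theorem mu_eq_neg_one_pow_card_sdiff {𝕜 α : Type*} [Ring 𝕜] [DecidableEq α] {s t : Finset α}
    (hst : s ⊆ t) : mu 𝕜 s t = (-1) ^ #(t \ s) := by
  refine (eq_mu_of_eq_neg_sum_Ico (fun u => (-1) ^ #(u \ s)) (by simp) (fun u hsu => ?_) t hst).symm
  have h_Icc : ∑ v ∈ Icc s u, (-1 : 𝕜) ^ #(v \ s) = 0 := by
    have h_disj : ∀ v ∈ (u \ s).powerset, Disjoint v s := fun v hv =>
      disjoint_of_subset_left (mem_powerset.1 hv) sdiff_disjoint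
    rw [Icc_eq_image_powerset hsu.le, sum_image fun v hv w hw h => by
      rw [← sdiff_eq_self_of_disjoint (h_disj v hv), ← sdiff_eq_self_of_disjoint (h_disj w hw),
        ← union_sdiff_left, h, union_sdiff_left]]
    have h_alt := congrArg (Int.cast : ℤ → 𝕜)
      (sum_powerset_neg_one_pow_card_of_nonempty (sdiff_nonempty.2 hsu.not_subset))
    push_cast at h_alt
    rw [← h_alt]
    refine sum_congr rfl fun v hv => ?_
    rw [union_sdiff_left, sdiff_eq_self_of_disjoint (h_disj v hv)]
  rw [Icc_eq_cons_Ico hsu.le, sum_cons] at h_Icc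
  exact eq_neg_of_add_eq_zero_left h_Icc

theorem mu_empty_univ {𝕜 α : Type*} [Ring 𝕜] [Finite α] [LocallyFiniteOrder (Set α)]
    [DecidableEq (Set α)] : mu 𝕜 (∅ : Set α) Set.univ = (-1) ^ Nat.card α := by
  classical
  have := Fintype.ofFinite α
  rw [← coe_empty, ← coe_univ, ← Fintype.coe_finsetOrderIsoSet, mu_orderIso,
    mu_eq_neg_one_pow_card_sdiff (empty_subset _), sdiff_empty, card_univ, Nat.card_eq_fintype_card]

end IncidenceAlgebra

section OrderComplex
variable {α : Type*} [PartialOrder α]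

theorem IsChain.exists_isGreatest_of_finset {C : Finset α} (hC : IsChain (· ≤ ·) (C : Set α))
    (hne : C.Nonempty) : ∃ z, IsGreatest (C : Set α) z := by
  obtain ⟨z, hz⟩ := C.exists_maximal hne
  refine ⟨z, hz.prop, fun c hc => ?_⟩
  obtain rfl | hcz := eq_or_ne c z
  · exact le_rfl
  exact (hC hc hz.prop hcz).elim id (hz.le_of_ge hc)

variable [LocallyFiniteOrder α]

open Classical in
noncomputable def chainsIoo (x y : α) : Finset (Finset α) :=
  (Ioo x y).powerset.filter fun C => IsChain (· ≤ ·) (C : Set α)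

theorem mem_chainsIoo {x y : α} {C : Finset α} :
    C ∈ chainsIoo x y ↔ C ⊆ Ioo x y ∧ IsChain (· ≤ ·) (C : Set α) := by
  simp [chainsIoo]

noncomputable def redEulerIoo (x y : α) : ℤ :=
  ∑ C ∈ chainsIoo x y, (-1) ^ (#C + 1)

theorem redEulerIoo_eq (x y : α) :
    redEulerIoo x y = -1 - ∑ z ∈ Ioo x y, redEulerIoo x z := by
  classical
  have h_empty : ∅ ∈ chainsIoo x y := mem_chainsIoo.2 ⟨empty_subset _, by simp⟩
  have h_lt : ∀ {z C}, C ∈ chainsIoo x z → ∀ c ∈ C, c < z := fun hC c hc =>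
    (mem_Ioo.1 ((mem_chainsIoo.1 hC).1 hc)).2
  -- a nonempty chain is determined by its greatest element `z` and the chain below `z`
  have h_top : ∑ p ∈ (Ioo x y).sigma (chainsIoo x ·), -(-1 : ℤ) ^ (#p.2 + 1) =
      ∑ C ∈ (chainsIoo x y).erase ∅, (-1) ^ (#C + 1) := by
    refine sum_bij (fun p _ => insert p.1 p.2) (fun ⟨z, C⟩ hp => ?_) (fun ⟨z, C⟩ hp ⟨w, D⟩ hq h => ?_)
      (fun C hC => ?_) (fun ⟨z, C⟩ hp => ?_)
    · obtain ⟨hz, hC⟩ := mem_sigma.1 hp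
      obtain ⟨hCz, hC_chain⟩ := mem_chainsIoo.1 hC
      refine mem_erase.2 ⟨insert_ne_empty _ _, mem_chainsIoo.2 ⟨insert_subset hz ?_, ?_⟩⟩
      · exact fun c hc => mem_Ioo.2 ⟨(mem_Ioo.1 (hCz hc)).1, (h_lt hC c hc).trans (mem_Ioo.1 hz).2⟩
      · rw [coe_insert]
        exact hC_chain.insert fun c hc _ => Or.inr (h_lt hC c hc).le
    · have hC := (mem_sigma.1 hp).2
      have hD := (mem_sigma.1 hq).2
      dsimp only at h hC hD
      have hzw : z = w := by
        have hz : z ∈ insert w D := h ▸ mem_insert_self z C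
        have hw : w ∈ insert z C := h.symm ▸ mem_insert_self w D
        rcases mem_insert.1 hz with hzw | hzD
        · exact hzw
        rcases mem_insert.1 hw with hwz | hwC
        · exact hwz.symm
        exact absurd ((h_lt hD z hzD).trans (h_lt hC w hwC)) (lt_irrefl z)
      subst hzw
      have h_erase := congrArg (·.erase z) h
      simp only [erase_insert (fun hz => lt_irrefl z (h_lt hC z hz)),
        erase_insert (fun hz => lt_irrefl z (h_lt hD z hz))] at h_erase
      rw [h_erase]
    · obtain ⟨hC_ne, hC⟩ := mem_erase.1 hC
      obtain ⟨hCxy, hC_chain⟩ := mem_chainsIoo.1 hC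
      obtain ⟨z, hz, hz_top⟩ := hC_chain.exists_isGreatest_of_finset (nonempty_iff_ne_empty.2 hC_ne)
      refine ⟨⟨z, C.erase z⟩, mem_sigma.2 ⟨hCxy hz, mem_chainsIoo.2 ⟨fun c hc => ?_, ?_⟩⟩,
        insert_erase hz⟩
      · obtain ⟨hcz, hc⟩ := mem_erase.1 hc
        exact mem_Ioo.2 ⟨(mem_Ioo.1 (hCxy hc)).1, (hz_top hc).lt_of_ne hcz⟩
      · exact hC_chain.mono (coe_subset.2 (erase_subset z C))
    · have hzC : z ∉ C := fun hz => lt_irrefl z (h_lt (mem_sigma.1 hp).2 z hz)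
      rw [card_insert_of_notMem hzC, pow_succ _ (#C + 1)]
      ring
  rw [redEulerIoo, ← add_sum_erase _ _ h_empty, ← h_top, sum_sigma]
  simp [redEulerIoo, sub_eq_add_neg]

theorem mu_eq_redEulerIoo [DecidableEq α] {x y : α} (hxy : x < y) :
    IncidenceAlgebra.mu ℤ x y = redEulerIoo x y := by
  have h := IncidenceAlgebra.eq_mu_of_eq_neg_sum_Ico (fun z => if z = x then 1 else redEulerIoo x z)
    (by simp) (fun b hxb => ?_) y hxy.le
  · simpa [hxy.ne'] using h.symm
  rw [Ico_eq_cons_Ioo hxb, sum_cons, if_neg hxb.ne', redEulerIoo_eq,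
    sum_congr rfl fun z hz => if_neg (mem_Ioo.1 hz).1.ne', if_pos rfl]
  ring

theorem redEuler13_eq_redEulerIoo {β : Type*} [Finite β] [PartialOrder β] (e : β ↪o α) {x y : α}
    (he : ∀ a, a ∈ Set.range e ↔ x < a ∧ a < y) : redEuler13 β = redEulerIoo x y := by
  classical
  have := Fintype.ofFinite β
  unfold redEuler13 redEulerIoo
  refine sum_nbij' (fun C => C.map e.toEmbedding) (fun D => univ.filter (e · ∈ D))
    (fun C hC => ?_) (fun D hD => ?_) (fun C _ => ?_) (fun D hD => ?_) (fun C _ => by simp)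
  · simp only [mem_filter, mem_powerset, subset_univ, true_and] at hC
    refine mem_chainsIoo.2 ⟨fun a ha => ?_, ?_⟩
    · obtain ⟨b, -, rfl⟩ := mem_map.1 ha
      exact mem_Ioo.2 ((he _).1 ⟨b, rfl⟩)
    · rw [coe_map]
      exact hC.image e
  · simp only [mem_filter, mem_powerset, subset_univ, true_and, coe_filter_univ]
    exact (mem_chainsIoo.1 hD).2.preimage_embedding e
  · ext b
    simp
  · ext a
    simp only [mem_map, mem_filter, mem_univ, true_and]
    refine ⟨fun ⟨b, hb, hba⟩ => hba ▸ hb, fun ha => ?_⟩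
    obtain ⟨b, rfl⟩ := (he a).2 (mem_Ioo.1 ((mem_chainsIoo.1 hD).1 ha))
    exact ⟨b, ha, rfl⟩

end OrderComplex

section Subrack
variable {G : Type*} [Group G]

abbrev Subracks (X : Set G) := {S : Set G // IsSubrackOf13 X S}

theorem isSubrackOf13_empty (X : Set G) : IsSubrackOf13 X ∅ := ⟨Set.empty_subset X, by simp⟩

theorem conj_eq_of_mem_center_left {a : G} (ha : a ∈ Subgroup.center G) (b : G) :
    a * b * a⁻¹ = b :=
  Commute.mul_inv_cancel (Subgroup.mem_center_iff.1 ha b).symm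

theorem conj_eq_of_mem_center_right (a : G) {b : G} (hb : b ∈ Subgroup.center G) :
    a * b * a⁻¹ = b :=
  Commute.mul_inv_cancel (Subgroup.mem_center_iff.1 hb a)

theorem mem_center_of_conj_mem_center {a b : G} (h : a * b * a⁻¹ ∈ Subgroup.center G) :
    b ∈ Subgroup.center G := by
  simpa [mul_assoc] using (Subgroup.instNormalCenter (G := G)).conj_mem _ h a⁻¹

variable (X : Set G)

local notation "Z" => X ∩ (Subgroup.center G : Set G)

theorem IsSubrackOf13.diff_center {S : Set G} (hS : IsSubrackOf13 X S) :
    IsSubrackOf13 (X \ Z) (S \ Z) := by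
  refine ⟨Set.sdiff_subset_sdiff_left hS.1, fun a ha b hb => ⟨hS.2 a ha.1 b hb.1, ?_⟩⟩
  exact fun h => hb.2 ⟨hS.1 hb.1, mem_center_of_conj_mem_center h.2⟩

theorem IsSubrackOf13.union_of_subset_center {F T : Set G} (hF : F ⊆ Z)
    (hT : IsSubrackOf13 (X \ Z) T) : IsSubrackOf13 X (F ∪ T) := by
  refine ⟨Set.union_subset (hF.trans Set.inter_subset_left) (hT.1.trans Set.sdiff_subset), ?_⟩
  rintro a ha b (hb | hb)
  · rw [conj_eq_of_mem_center_right a (hF hb).2]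
    exact Or.inl hb
  rcases ha with ha | ha
  · rw [conj_eq_of_mem_center_left (hF ha).2]
    exact Or.inr hb
  · exact Or.inr (hT.2 a ha b hb)

def subracksOrderIsoProd : Subracks X ≃o Set ↥Z × Subracks (X \ Z) where
  toFun S := (Subtype.val ⁻¹' S.1, ⟨S.1 \ Z, S.2.diff_center X⟩)
  invFun p := ⟨Subtype.val '' p.1 ∪ p.2.1,
    p.2.2.union_of_subset_center X (Subtype.coe_image_subset _ _)⟩
  left_inv S := by
    ext g
    by_cases hg : g ∈ Z <;> simp [hg]
  right_inv := by
    rintro ⟨F, T, hT⟩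
    have hTZ : Disjoint T Z := (Set.subset_sdiff.1 hT.1).2
    refine Prod.ext ?_ (Subtype.ext ?_) <;> dsimp only
    · rw [Set.preimage_union, Set.preimage_image_eq _ Subtype.val_injective,
        Set.preimage_eq_empty (by rwa [Subtype.range_coe]), Set.union_empty]
    · rw [Set.union_sdiff_distrib, Set.sdiff_eq_empty.2 (Subtype.coe_image_subset _ F),
        Set.empty_union, sdiff_eq_left.2 hTZ]
  map_rel_iff' {S S'} := by
    refine ⟨fun ⟨hZ, hY⟩ g hg => ?_, fun h => ⟨Set.preimage_mono h, Set.sdiff_subset_sdiff_left h⟩⟩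
    by_cases hgZ : g ∈ Z
    · exact hZ (show ⟨g, hgZ⟩ ∈ Subtype.val ⁻¹' S.1 from hg)
    · exact (hY ⟨hg, hgZ⟩).1

theorem subracksOrderIsoProd_empty :
    subracksOrderIsoProd X ⟨∅, isSubrackOf13_empty X⟩ = (∅, ⟨∅, isSubrackOf13_empty _⟩) :=
  Prod.ext (Set.preimage_empty) (Subtype.ext (Set.empty_sdiff _))

theorem subracksOrderIsoProd_self (hX : IsSubrackOf13 X X) :
    subracksOrderIsoProd X ⟨X, hX⟩ = (Set.univ, ⟨X \ Z, hX.diff_center X⟩) :=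
  Prod.ext (Set.eq_univ_of_forall fun z => z.2.1) rfl

theorem redEuler13_properSubracks [Finite G] [LocallyFiniteOrder (Subracks X)]
    [DecidableEq (Subracks X)] (hX : IsSubrackOf13 X X) (hne : X.Nonempty) :
    redEuler13 {S : Set G // IsSubrackOf13 X S ∧ S ≠ ∅ ∧ S ≠ X} =
      IncidenceAlgebra.mu ℤ (⟨∅, isSubrackOf13_empty X⟩ : Subracks X) ⟨X, hX⟩ := by
  have h_lt : (⟨∅, isSubrackOf13_empty X⟩ : Subracks X) < ⟨X, hX⟩ := Set.empty_ssubset.2 hne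
  rw [mu_eq_redEulerIoo h_lt]
  refine redEuler13_eq_redEulerIoo (Subtype.orderEmbedding fun S hS => hS.1) fun ⟨T, hT⟩ => ?_
  rw [Subtype.mk_lt_mk, Subtype.mk_lt_mk, Set.empty_ssubset, hT.1.lt_iff_ne,
    Set.nonempty_iff_ne_empty]
  refine ⟨?_, fun h => ⟨⟨T, hT, h⟩, rfl⟩⟩
  rintro ⟨⟨U, hU⟩, h⟩
  cases h
  exact hU.2

end Subrack

theorem stmt_13_general {G : Type*} [Group G] [Fintype G] (X : Set G)
    (hX : ∀ a ∈ X, ∀ g : G, g * a * g⁻¹ ∈ X)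
    (hY : (X \ (X ∩ (Subgroup.center G : Set G))).Nonempty) :
    redEuler13 {S : Set G // IsSubrackOf13 X S ∧ S ≠ ∅ ∧ S ≠ X} =
      (-1 : ℤ) ^ (Nat.card (X ∩ (Subgroup.center G : Set G) : Set G)) *
        redEuler13 {S : Set G //
          IsSubrackOf13 (X \ (X ∩ (Subgroup.center G : Set G))) S ∧ S ≠ ∅ ∧
            S ≠ X \ (X ∩ (Subgroup.center G : Set G))} := by
  classical
  have hX_rack : IsSubrackOf13 X X := ⟨subset_rfl, fun a _ b hb => hX b hb a⟩
  let := Fintype.toLocallyFiniteOrder (α := Subracks X)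
  let := Fintype.toLocallyFiniteOrder (α := Subracks (X \ (X ∩ (Subgroup.center G : Set G))))
  let := Fintype.toLocallyFiniteOrder (α := Set ↥(X ∩ (Subgroup.center G : Set G)))
  rw [redEuler13_properSubracks X hX_rack (hY.mono Set.sdiff_subset),
    redEuler13_properSubracks _ (hX_rack.diff_center X) hY,
    ← IncidenceAlgebra.mu_orderIso (subracksOrderIsoProd X), subracksOrderIsoProd_empty,
    subracksOrderIsoProd_self, ← IncidenceAlgebra.mu_prod_mu, IncidenceAlgebra.prod_mk,
    IncidenceAlgebra.mu_empty_univ]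

/-- Let `G` be a finite group, `X ⊆ G` a conjugation rack, and
`Z = X ∩ Z(G)`, with `Z` and `X \ Z` both nonempty.  Then the reduced Euler
characteristic of the order complex of the poset of nonempty proper subracks of `X`
equals `(-1)^|Z|` times that of the poset of nonempty proper subracks of `X \ Z`. -/
theorem stmt_13 {G : Type*} [Group G] [Fintype G] (X : Set G)
    (hX : ∀ a ∈ X, ∀ g : G, g * a * g⁻¹ ∈ X)
    (hZ : (X ∩ (Subgroup.center G : Set G)).Nonempty)
    (hY : (X \ (X ∩ (Subgroup.center G : Set G))).Nonempty) :
    redEuler13 {S : Set G // IsSubrackOf13 X S ∧ S ≠ ∅ ∧ S ≠ X} =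
      (-1 : ℤ) ^ (Nat.card (X ∩ (Subgroup.center G : Set G) : Set G)) *
        redEuler13 {S : Set G //
          IsSubrackOf13 (X \ (X ∩ (Subgroup.center G : Set G))) S ∧ S ≠ ∅ ∧
            S ≠ X \ (X ∩ (Subgroup.center G : Set G))} :=
  stmt_13_general X hX hY
end

section
/- Let P be a finite poset and x a minimal element of P. Suppose the automorphism group of P acts transitively on the set of minimal elements of P. Then P is graded (all maximal chains of P have the same length) if and only if the subposet P_{≥x} = {y ∈ P : y ≥ x} is graded. -/
/-!
Every maximal chain of `P` starts at a minimal element of `P`, and an automorphism moving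
that element to `x` carries the chain to a maximal chain through `x` of the same size. The
maximal chains of `P` through the minimal element `x` are exactly the maximal chains of
`P_{≥x}`, so both conditions say that all these chains have one common size.
-/

/-- A finite poset is graded (pure) if all of its maximal chains have the same
cardinality (equivalently, the same length). -/
def IsGraded16 (P : Type*) [PartialOrder P] [Finite P] : Prop :=
  letI := Fintype.ofFinite P
  ∀ C D : Finset P,
    Maximal (fun E : Finset P => IsChain (· ≤ ·) (E : Set P)) C →
    Maximal (fun E : Finset P => IsChain (· ≤ ·) (E : Set P)) D →
    C.card = D.card

theorem Finset.maximal_isChain_iff_isMaxChain {α : Type*} [Finite α] {r : α → α → Prop}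
    {C : Finset α} :
    Maximal (fun E : Finset α => IsChain r (E : Set α)) C ↔ IsMaxChain r (C : Set α) := by
  refine ⟨fun h => ⟨h.1, fun t ht hCt => ?_⟩, fun h => ⟨h.1, fun E hE hCE => ?_⟩⟩
  · obtain ⟨E, rfl⟩ := (Set.toFinite t).exists_finset_coe
    exact hCt.antisymm (h.2 ht (Finset.coe_subset.1 hCt))
  · exact Finset.coe_subset.1 (h.2 hE (Finset.coe_subset.2 hCE)).ge

theorem isGraded16_iff_forall_flag_ncard_eq (P : Type*) [PartialOrder P] [Finite P] :
    IsGraded16 P ↔ ∀ s t : Flag P, (s : Set P).ncard = (t : Set P).ncard := by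
  simp only [IsGraded16, Finset.maximal_isChain_iff_isMaxChain]
  refine ⟨fun h s t => ?_, fun h C D hC hD => ?_⟩
  · obtain ⟨C, hC⟩ := (Set.toFinite (s : Set P)).exists_finset_coe
    obtain ⟨D, hD⟩ := (Set.toFinite (t : Set P)).exists_finset_coe
    rw [← hC, ← hD, Set.ncard_coe_finset, Set.ncard_coe_finset]
    exact h C D (hC ▸ s.maxChain) (hD ▸ t.maxChain)
  · simpa only [Flag.coe_ofIsMaxChain, Set.ncard_coe_finset] using
      h (.ofIsMaxChain _ hC) (.ofIsMaxChain _ hD)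

namespace Flag

variable {α : Type*} [Preorder α] {x : α}

theorem isMin_of_minimal (s : Flag α) {m : α} (hm : Minimal (· ∈ s) m) : IsMin m := by
  have hle : ∀ b ∈ s, m ≤ b := fun b hb => (s.le_or_le hm.1 hb).elim id (hm.2 hb)
  intro p hpm
  exact hm.2 (mem_iff_forall_le_or_ge.2 fun b hb => .inl (hpm.trans (hle b hb))) hpm

theorem exists_isMin_mem [WellFoundedLT α] [Nonempty α] (s : Flag α) : ∃ m ∈ s, IsMin m := by
  obtain ⟨m, hm⟩ := exists_minimal_of_wellFoundedLT (· ∈ s) (s.maxChain.nonempty_iff.1 ‹_›)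
  exact ⟨m, hm.1, s.isMin_of_minimal hm⟩

theorem le_of_isMin_mem (s : Flag α) (hx : IsMin x) (hxs : x ∈ s) {y : α} (hy : y ∈ s) :
    x ≤ y :=
  (s.le_or_le hxs hy).elim id fun hyx => hx hyx

theorem mk_mem (d : Flag {y : α // x ≤ y}) : ⟨x, le_rfl⟩ ∈ d :=
  mem_iff_forall_le_or_ge.2 fun b _ => .inl b.2

theorem isMaxChain_image_val (hx : IsMin x) (d : Flag {y : α // x ≤ y}) :
    IsMaxChain (· ≤ ·) (Subtype.val '' (d : Set {y : α // x ≤ y})) := by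
  refine ⟨d.chain_le.image_of_map_rel _ _ Subtype.val fun _ _ h => h, fun t ht hdt => ?_⟩
  refine hdt.antisymm fun p hp => ?_
  have hxt : x ∈ t := hdt ⟨_, d.mk_mem, rfl⟩
  have hxp : x ≤ p := (ht.total hxt hp).elim id fun hpx => hx hpx
  refine ⟨⟨p, hxp⟩, mem_iff_forall_le_or_ge.2 fun b hb => ?_, rfl⟩
  exact ht.total hp (hdt ⟨b, hb, rfl⟩)

theorem isMaxChain_preimage_val (hx : IsMin x) (s : Flag α) (hxs : x ∈ s) :
    IsMaxChain (· ≤ ·) (Subtype.val ⁻¹' (s : Set α) : Set {y : α // x ≤ y}) := by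
  refine ⟨s.chain_le.preimage _ _ _ Subtype.val_injective fun _ _ h => h, fun t ht hst => ?_⟩
  have himage : (s : Set α) = Subtype.val '' t :=
    s.maxChain.2 (ht.image_of_map_rel _ _ Subtype.val fun _ _ h => h)
      fun y hy => ⟨⟨y, s.le_of_isMin_mem hx hxs hy⟩, hst hy, rfl⟩
  rw [himage, Set.preimage_image_eq _ Subtype.val_injective]

theorem ncard_preimage_val (hx : IsMin x) (s : Flag α) (hxs : x ∈ s) :
    (Subtype.val ⁻¹' (s : Set α) : Set {y : α // x ≤ y}).ncard = (s : Set α).ncard :=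
  Set.ncard_preimage_of_injective_subset_range Subtype.val_injective
    fun y hy => ⟨⟨y, s.le_of_isMin_mem hx hxs hy⟩, rfl⟩

theorem exists_flag_ge_ncard_eq [WellFoundedLT α] (hx : IsMin x)
    (htrans : ∀ y : α, IsMin y → ∃ e : α ≃o α, e y = x) (s : Flag α) :
    ∃ d : Flag {y : α // x ≤ y}, (d : Set {y : α // x ≤ y}).ncard = (s : Set α).ncard := by
  have : Nonempty α := ⟨x⟩
  obtain ⟨m, hms, hm⟩ := s.exists_isMin_mem
  obtain ⟨e, rfl⟩ := htrans m hm
  have hxs : e m ∈ map e s := ⟨m, hms, rfl⟩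
  refine ⟨.ofIsMaxChain _ ((map e s).isMaxChain_preimage_val hx hxs), ?_⟩
  rw [coe_ofIsMaxChain, ncard_preimage_val hx _ hxs, coe_map,
    Set.ncard_image_of_injective _ e.injective]

end Flag

/-- Let `P` be a finite poset, `x` a minimal element of `P`, and suppose
the automorphism group of `P` acts transitively on the minimal elements of `P`.  Then
`P` is graded if and only if the subposet `P_{≥ x} = {y : y ≥ x}` is graded. -/
theorem stmt_16 {P : Type*} [PartialOrder P] [Finite P] (x : P) (hx : IsMin x)
    (htrans : ∀ y z : P, IsMin y → IsMin z → ∃ e : P ≃o P, e y = z) :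
    IsGraded16 P ↔ IsGraded16 {y : P // x ≤ y} := by
  rw [isGraded16_iff_forall_flag_ncard_eq, isGraded16_iff_forall_flag_ncard_eq]
  constructor
  · intro h d₁ d₂
    have key := h (.ofIsMaxChain _ (d₁.isMaxChain_image_val hx))
      (.ofIsMaxChain _ (d₂.isMaxChain_image_val hx))
    simpa only [Flag.coe_ofIsMaxChain, Set.ncard_image_of_injective _ Subtype.val_injective]
      using key
  · intro h s₁ s₂
    have hmove : ∀ y : P, IsMin y → ∃ e : P ≃o P, e y = x := fun y hy => htrans y x hy hx
    obtain ⟨d₁, hd₁⟩ := Flag.exists_flag_ge_ncard_eq hx hmove s₁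
    obtain ⟨d₂, hd₂⟩ := Flag.exists_flag_ge_ncard_eq hx hmove s₂
    rw [← hd₁, ← hd₂, h d₁ d₂]
end

section
/- Let T be the conjugacy class of transpositions in the symmetric group S_4. Then T is closed under conjugation, (T, ▷) with a ▷ b = a*b*a⁻¹ is a quandle with 6 elements, and its subrack lattice R(T) (all subsets of T closed under the conjugation operation, ordered by inclusion) is isomorphic as a lattice to the partition lattice Π_4 of set partitions of {1,2,3,4} ordered by refinement. -/
/-!
A subrack `S` of transpositions defines the relation `i ∼ j ↔ i = j ∨ (i j) ∈ S`, which is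
transitive because `(i j) (j k) (i j)⁻¹ = (i k)`. Conversely, an equivalence relation gives the set
of transpositions moving every point within its class, which is closed under conjugation. These two
monotone maps are mutually inverse. Transpositions correspond to two-element subsets, which gives
their number `(4 choose 2) = 6`.
-/

open Equiv

section

variable {α : Type*} [DecidableEq α]

namespace Equiv

theorem swap_eq_swap_iff {x y u v : α} (hxy : x ≠ y) :
    swap x y = swap u v ↔ x = u ∧ y = v ∨ x = v ∧ y = u := by
  refine ⟨fun h => ?_, ?_⟩
  · have hy : swap u v x = y := by rw [← h, swap_apply_left]
    by_cases hxu : x = u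
    · subst hxu
      exact .inl ⟨rfl, by rw [← hy, swap_apply_left]⟩
    by_cases hxv : x = v
    · subst hxv
      exact .inr ⟨rfl, by rw [← hy, swap_apply_right]⟩
    rw [swap_apply_of_ne_of_ne hxu hxv] at hy
    exact absurd hy hxy
  · rintro (⟨rfl, rfl⟩ | ⟨rfl, rfl⟩)
    · rfl
    · exact swap_comm _ _

namespace Perm

theorem IsSwap.conj {σ : Perm α} (hσ : σ.IsSwap) (g : Perm α) : (g * σ * g⁻¹).IsSwap := by
  obtain ⟨x, y, hxy, rfl⟩ := hσ
  exact ⟨g x, g y, g.injective.ne hxy, (swap_apply_apply g x y).symm⟩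

theorem isSwap_conj_iff {σ g : Perm α} : (g * σ * g⁻¹).IsSwap ↔ σ.IsSwap :=
  ⟨fun h => by simpa [mul_assoc] using h.conj g⁻¹, fun h => h.conj g⟩

def swapOfSym2 : Sym2 α → Perm α :=
  Sym2.lift ⟨fun x y => swap x y, fun x y => swap_comm x y⟩

theorem bijOn_swapOfSym2 :
    Set.BijOn swapOfSym2 {z : Sym2 α | ¬z.IsDiag} {σ : Perm α | σ.IsSwap} := by
  refine ⟨fun z => Sym2.ind (fun x y hxy => ⟨x, y, hxy, rfl⟩) z, ?_, ?_⟩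
  · intro z hz w _ h
    induction z using Sym2.ind with | h x y =>
    induction w using Sym2.ind with | h u v =>
    exact Sym2.eq_iff.2 ((swap_eq_swap_iff hz).1 h)
  · rintro σ ⟨x, y, hxy, rfl⟩
    exact ⟨s(x, y), hxy, rfl⟩

theorem card_isSwap [Fintype α] :
    Nat.card {σ : Perm α | σ.IsSwap} = (Fintype.card α).choose 2 := by
  rw [← Sym2.card_subtype_not_diag, ← Nat.card_eq_fintype_card]
  exact (Nat.card_congr bijOn_swapOfSym2.equiv).symm

end Perm

end Equiv

abbrev SwapSubrack (α : Type*) [DecidableEq α] :=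
  {S : Set (Perm α) // S ⊆ {σ | σ.IsSwap} ∧ ∀ a ∈ S, ∀ b ∈ S, a * b * a⁻¹ ∈ S}

namespace SwapSubrack

def toSetoid (S : SwapSubrack α) : Setoid α where
  r i j := i = j ∨ swap i j ∈ S.1
  iseqv := by
    refine ⟨fun _ => .inl rfl, ?_, ?_⟩
    · rintro i j (rfl | h)
      · exact .inl rfl
      · exact .inr (swap_comm i j ▸ h)
    · rintro i j k (rfl | hij) (rfl | hjk)
      · exact .inl rfl
      · exact .inr hjk
      · exact .inr hij
      by_cases hki : k = i
      · exact .inl hki.symm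
      by_cases hkj : k = j
      · exact .inr (hkj ▸ hij)
      -- conjugating `(j k)` by `(i j)` gives `(i k)`
      have := S.2.2 _ hij _ hjk
      rw [← swap_apply_apply, swap_apply_right, swap_apply_of_ne_of_ne hki hkj] at this
      exact .inr this

@[simp]
theorem toSetoid_rel {S : SwapSubrack α} {i j : α} : S.toSetoid i j ↔ i = j ∨ swap i j ∈ S.1 :=
  Iff.rfl

theorem toSetoid_monotone : Monotone (toSetoid (α := α)) :=
  fun _ _ hST _ _ => Or.imp_right (@hST _)

end SwapSubrack

namespace Setoid

theorem rel_swap_apply_self {s : Setoid α} {i j : α} (hij : s i j) (x : α) : s (swap i j x) x := by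
  rcases eq_or_ne x i with rfl | hxi
  · simpa using s.symm hij
  rcases eq_or_ne x j with rfl | hxj
  · simpa using hij
  · simp [swap_apply_of_ne_of_ne hxi hxj]

def swapSubrack (s : Setoid α) : SwapSubrack α :=
  ⟨{σ | σ.IsSwap ∧ ∀ x, s (σ x) x}, fun _ hσ => hσ.1,
    fun a ha b hb => ⟨hb.1.conj a, fun x => by
      have hab : s (a (b (a⁻¹ x))) (a⁻¹ x) := s.trans (ha.2 _) (hb.2 _)
      have hx : s (a⁻¹ x) x := s.symm (by simpa using ha.2 (a⁻¹ x))
      simpa [mul_apply] using s.trans hab hx⟩⟩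

theorem swapSubrack_monotone : Monotone (swapSubrack (α := α)) :=
  fun _ _ hst _ hσ => ⟨hσ.1, fun x => hst (hσ.2 x)⟩

theorem toSetoid_swapSubrack (s : Setoid α) : s.swapSubrack.toSetoid = s := by
  ext i j
  refine ⟨?_, fun hij => ?_⟩
  · rintro (rfl | ⟨-, hswap⟩)
    · exact s.refl i
    · simpa using hswap j
  · by_cases h : i = j
    · exact .inl h
    · exact .inr ⟨Perm.swap_isSwap_iff.2 h, s.rel_swap_apply_self hij⟩

end Setoid

namespace SwapSubrack

theorem swapSubrack_toSetoid (S : SwapSubrack α) : S.toSetoid.swapSubrack = S := by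
  refine Subtype.ext (Set.ext fun σ => ⟨?_, fun hσ => ?_⟩)
  · rintro ⟨⟨i, j, hij, rfl⟩, hrel⟩
    have hji := (toSetoid_rel.1 (hrel i)).resolve_left (by simpa using hij.symm)
    simpa [swap_comm] using hji
  · obtain ⟨i, j, -, rfl⟩ := S.2.1 hσ
    refine ⟨S.2.1 hσ, fun x => ?_⟩
    rcases eq_or_ne x i with rfl | hxi
    · simpa using .inr (swap_comm x j ▸ hσ)
    rcases eq_or_ne x j with rfl | hxj
    · simpa using .inr hσ
    · simp [swap_apply_of_ne_of_ne hxi hxj]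

def orderIsoSetoid : SwapSubrack α ≃o Setoid α :=
  Equiv.toOrderIso ⟨toSetoid, Setoid.swapSubrack, swapSubrack_toSetoid, Setoid.toSetoid_swapSubrack⟩
    toSetoid_monotone Setoid.swapSubrack_monotone

end SwapSubrack

end

/-- Let `T` be the set of transpositions in `S₄`.  Then `T` is closed
under conjugation, `(T, ▷)` with `a ▷ b = a * b * a⁻¹` is a quandle with 6 elements,
and its subrack lattice (the subsets of `T` closed under the conjugation operation,
ordered by inclusion) is isomorphic to the partition lattice `Π₄` of set partitions of
`{1,2,3,4}` ordered by refinement (modelled as the lattice `Setoid (Fin 4)` of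
equivalence relations on `Fin 4`). -/
theorem stmt_19 :
    (∀ a ∈ {σ : Equiv.Perm (Fin 4) | σ.IsSwap}, ∀ b ∈ {σ : Equiv.Perm (Fin 4) | σ.IsSwap},
      a * b * a⁻¹ ∈ {σ : Equiv.Perm (Fin 4) | σ.IsSwap}) ∧
    (∀ a ∈ {σ : Equiv.Perm (Fin 4) | σ.IsSwap},
      Set.BijOn (fun b => a * b * a⁻¹) {σ : Equiv.Perm (Fin 4) | σ.IsSwap}
        {σ : Equiv.Perm (Fin 4) | σ.IsSwap}) ∧
    (∀ a : Equiv.Perm (Fin 4), a * a * a⁻¹ = a) ∧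
    Nat.card {σ : Equiv.Perm (Fin 4) | σ.IsSwap} = 6 ∧
    Nonempty
      ({S : Set (Equiv.Perm (Fin 4)) // S ⊆ {σ | σ.IsSwap} ∧
          ∀ a ∈ S, ∀ b ∈ S, a * b * a⁻¹ ∈ S} ≃o Setoid (Fin 4)) :=
  ⟨fun a _ _ hb => hb.conj a,
    fun a _ => (MulAut.conj a).toEquiv.bijOn fun _ => Perm.isSwap_conj_iff,
    fun a => mul_inv_cancel_right a a,
    by rw [Perm.card_isSwap]; rfl,
    ⟨SwapSubrack.orderIsoSetoid⟩⟩
end
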